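/- Let 𝒳 and 𝒴 be finite nonempty types and let p : 𝒳 × 𝒴 → ℝ be a joint probability mass function, i.e., p(x,y) ≥ 0 for all (x,y) and Σ_{x,y} p(x,y) = 1. Let p_Y(y) = Σ_x p(x,y) denote the marginal of Y, and define the conditional Shannon entropy H(X|Y) = -Σ_{(x,y) : p(x,y) > 0} p(x,y)·log( p(x,y) / p_Y(y) ). Then Σ_y max_x p(x,y) ≥ exp(-H(X|Y)). In other words, the success probability of the maximum a posteriori predictor of X from Y is at least exp(-H(X|Y)). -/
import Mathlib


/-- Discrete analog of Proposition 3.1: the success probability of the maximum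
a posteriori predictor of `X` from `Y`, namely `∑ y, max_x p (x, y)`, is at
least `exp (-H(X|Y))`, where `H(X|Y)` is the conditional Shannon entropy of the
joint pmf `p` (summing only over pairs with positive mass). -/
theorem map_success_ge_exp_neg_cond_entropy
    {X Y : Type*} [Fintype X] [Fintype Y] [Nonempty X] [Nonempty Y]
    (p : X × Y → ℝ) (hp : ∀ z, 0 ≤ p z) (hsum : ∑ z, p z = 1)
    (pY : Y → ℝ) (hpY : ∀ y, pY y = ∑ x, p (x, y))
    (H : ℝ)
    (hH : H = -∑ z ∈ Finset.univ.filter (fun z : X × Y => 0 < p z),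
        p z * Real.log (p z / pY z.2)) :
    Real.exp (-H) ≤ ∑ y, Finset.univ.sup' Finset.univ_nonempty (fun x => p (x, y)) := by
  classical
  set M : Y → ℝ := fun y => Finset.univ.sup' Finset.univ_nonempty (fun x => p (x, y)) with hMdef
  have hM0 : ∀ y, 0 ≤ M y := fun y =>
    le_trans (hp (Classical.arbitrary X, y)) (Finset.le_sup' (fun x => p (x, y)) (Finset.mem_univ _))
  have hMle : ∀ x y, p (x, y) ≤ M y := fun x y => Finset.le_sup' (fun x => p (x, y)) (Finset.mem_univ x)
  have hpY0 : ∀ y, 0 ≤ pY y := by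
    intro y; rw [hpY]; exact Finset.sum_nonneg fun x _ => hp _
  have hppY : ∀ x y, p (x, y) ≤ pY y := by
    intro x y; rw [hpY]
    exact Finset.single_le_sum (fun x _ => hp (x, y)) (Finset.mem_univ x)
  set T : Finset Y := Finset.univ.filter (fun y => 0 < pY y) with hT
  have hpYsum : ∑ y, pY y = 1 := by
    rw [← hsum, Fintype.sum_prod_type_right]
    exact Finset.sum_congr rfl fun y _ => hpY y
  have hw1 : ∑ y ∈ T, pY y = 1 := by
    rw [← hpYsum]
    apply Finset.sum_subset (Finset.filter_subset _ _)
    intro y _ hy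
    have := hpY0 y
    simp only [hT, Finset.mem_filter, Finset.mem_univ, true_and] at hy
    linarith
  -- Step 1 : -H ≤ ∑_{z : p z > 0} p z * log (M z.2 / pY z.2)
  have h1 : -H ≤ ∑ z ∈ Finset.univ.filter (fun z : X × Y => 0 < p z),
      p z * Real.log (M z.2 / pY z.2) := by
    rw [hH, neg_neg]
    apply Finset.sum_le_sum
    intro z hz
    have hz' : 0 < p z := (Finset.mem_filter.mp hz).2
    have hpz : p z ≤ pY z.2 := hppY z.1 z.2
    have hpYz : 0 < pY z.2 := lt_of_lt_of_le hz' hpz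
    apply mul_le_mul_of_nonneg_left _ hz'.le
    apply Real.log_le_log (div_pos hz' hpYz)
    exact div_le_div_of_nonneg_right (hMle z.1 z.2) hpYz.le
  -- Step 2 : this sum equals ∑_{y ∈ T} pY y * log (M y / pY y)
  have h2 : ∑ z ∈ Finset.univ.filter (fun z : X × Y => 0 < p z),
      p z * Real.log (M z.2 / pY z.2)
      = ∑ y ∈ T, pY y * Real.log (M y / pY y) := by
    have e1 : ∑ z ∈ Finset.univ.filter (fun z : X × Y => 0 < p z),
        p z * Real.log (M z.2 / pY z.2)
        = ∑ z : X × Y, p z * Real.log (M z.2 / pY z.2) := by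
      apply Finset.sum_subset (Finset.filter_subset _ _)
      intro z _ hz
      simp only [Finset.mem_filter, Finset.mem_univ, true_and] at hz
      have : p z = 0 := le_antisymm (not_lt.mp hz) (hp z)
      rw [this, zero_mul]
    have e2 : ∑ z : X × Y, p z * Real.log (M z.2 / pY z.2)
        = ∑ y, pY y * Real.log (M y / pY y) := by
      rw [Fintype.sum_prod_type_right]
      refine Finset.sum_congr rfl fun y _ => ?_
      show ∑ x : X, p (x, y) * Real.log (M y / pY y) = _
      rw [← Finset.sum_mul, ← hpY]
    have e3 : ∑ y, pY y * Real.log (M y / pY y)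
        = ∑ y ∈ T, pY y * Real.log (M y / pY y) := by
      symm
      apply Finset.sum_subset (Finset.filter_subset _ _)
      intro y _ hy
      simp only [hT, Finset.mem_filter, Finset.mem_univ, true_and] at hy
      have : pY y = 0 := le_antisymm (not_lt.mp hy) (hpY0 y)
      rw [this, zero_mul]
    rw [e1, e2, e3]
  -- Step 3 : Jensen for exp
  have h3 : Real.exp (∑ y ∈ T, pY y * Real.log (M y / pY y))
      ≤ ∑ y ∈ T, M y := by
    have hJ := convexOn_exp.map_sum_le (t := T) (w := pY)
      (p := fun y => Real.log (M y / pY y))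
      (fun y _ => hpY0 y) hw1 (fun y _ => Set.mem_univ _)
    simp only [smul_eq_mul] at hJ
    refine hJ.trans_eq ?_
    refine Finset.sum_congr rfl fun y hy => ?_
    simp only [hT, Finset.mem_filter, Finset.mem_univ, true_and] at hy
    have hMy : 0 < M y := by
      by_contra h
      push_neg at h
      have : pY y = 0 := by
        rw [hpY]
        exact Finset.sum_eq_zero fun x _ =>
          le_antisymm (le_trans (hMle x y) h) (hp (x, y))
      exact absurd this hy.ne'
    rw [Real.exp_log (div_pos hMy hy), mul_div_cancel₀ _ hy.ne']
  have h4 : ∑ y ∈ T, M y ≤ ∑ y, M y :=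
    Finset.sum_le_sum_of_subset_of_nonneg (Finset.filter_subset _ _)
      (fun y _ _ => hM0 y)
  calc Real.exp (-H) ≤ Real.exp (∑ y ∈ T, pY y * Real.log (M y / pY y)) := by
        rw [← h2]; exact Real.exp_le_exp.mpr h1
    _ ≤ ∑ y ∈ T, M y := h3
    _ ≤ ∑ y, M y := h4
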